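/- arXiv:1309.5927 — 2 statements merged into one kernel-verified Lean document; each statement's English description precedes it below -/
import Mathlib

section
/- There exists a family of unranked trees (s_n)_{n≥1} such that |dag(s_n)| = 3n(n+1)/2 and |hdag(s_n)| = 3n, and consequently |dag(s_n)| > (1/6)·|hdag(s_n)|². -/
inductive UTree (σ : Type) : Type where
  | node : σ → List (UTree σ) → UTree σ

namespace UTree
variable {σ : Type}

noncomputable instance : DecidableEq (UTree σ) := Classical.decEq _

def children : UTree σ → List (UTree σ)
  | node _ cs => cs

def subs : UTree σ → List (UTree σ)
  | node a cs => node a cs :: (cs.attach.map (fun ⟨c, _⟩ => subs c)).flatten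

def sibs : UTree σ → List (List (UTree σ))
  | node _ cs => cs.tails.filter (fun l => !l.isEmpty)
      ++ (cs.attach.map (fun ⟨c, _⟩ => sibs c)).flatten

def sibseqs (t : UTree σ) : List (List (UTree σ)) := [t] :: sibs t

def edges : UTree σ → ℕ
  | node _ cs => cs.length + (cs.attach.map (fun ⟨c, _⟩ => edges c)).sum

def rootDeg : UTree σ → ℕ
  | node _ cs => cs.length

def nodes : UTree σ → ℕ
  | node _ cs => 1 + (cs.attach.map (fun ⟨c, _⟩ => nodes c)).sum

end UTree

/-- The edge size of the minimal dag of `t`. -/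
noncomputable def UTree.dagEdges {σ : Type} (t : UTree σ) : ℕ :=
  ((UTree.subs t).dedup.map UTree.rootDeg).sum

/-- The edge size of the hybrid dag of `t`: the number of distinct non-leaf subtrees
(nonterminals of the dag grammar) plus the number of distinct sibling sequences of
length at least 2 (the shared suffixes of child sequences in binary encoding). -/
noncomputable def UTree.hdagEdges {σ : Type} (t : UTree σ) : ℕ :=
  ((UTree.subs t).filter (fun s => UTree.rootDeg s ≠ 0)).dedup.length +
    ((UTree.sibseqs t).filter (fun w => 2 ≤ w.length)).dedup.length

/-!
Take `s n = tower n n`, where `tower n k` is the tree of the nonterminal `A_{n-k}`: its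
children are `tower n (k-1), …, tower n 0` followed by `n` leaves. Its distinct subtrees are
the leaf and the `tower n j` with `j ≤ k`, of root degree `j + n`, which gives the dag size.
Every child list in it is a suffix of the root's child list, so its sibling sequences are
the nonempty suffixes of that single list of length `k + n`; as a suffix is determined by its
length, `k + n - 1` of them have length at least 2, and the hybrid dag has size
`(k + 1) + (k + n - 1)`.
-/

open Finset

theorem List.card_filter_length_le_tails {α : Type*} [DecidableEq α] (l : List α) (m : ℕ) :
    #{x ∈ l.tails.toFinset | m ≤ x.length} = l.length + 1 - m := by
  rw [← Nat.card_Icc]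
  refine card_nbij' List.length (fun k => l.drop (l.length - k)) ?_ ?_ ?_ ?_
  · intro x hx
    simp only [coe_filter, List.mem_toFinset, List.mem_tails, Set.mem_ofPred_eq] at hx
    simpa using ⟨hx.2, hx.1.length_le⟩
  · intro k hk
    simp only [coe_Icc, Set.mem_Icc] at hk
    simp [List.drop_suffix, hk.1, hk.2, Nat.sub_sub_self]
  · intro x hx
    simp only [coe_filter, List.mem_toFinset, List.mem_tails, Set.mem_ofPred_eq] at hx
    exact (List.suffix_iff_eq_drop.mp hx.1).symm
  · intro k hk
    simp only [coe_Icc, Set.mem_Icc] at hk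
    simp only [List.length_drop]
    omega

namespace UTree

variable {σ : Type}

theorem mem_subs_node (a : σ) (cs : List (UTree σ)) (x : UTree σ) :
    x ∈ subs (node a cs) ↔ x = node a cs ∨ ∃ c ∈ cs, x ∈ subs c := by
  simp [subs, List.mem_flatten]

theorem mem_sibs_node (a : σ) (cs : List (UTree σ)) (x : List (UTree σ)) :
    x ∈ sibs (node a cs) ↔ (x <:+ cs ∧ x ≠ []) ∨ ∃ c ∈ cs, x ∈ sibs c := by
  simp only [sibs, List.mem_append, List.mem_filter, List.mem_tails, List.mem_flatten,
    List.mem_map, List.mem_attach, Bool.not_eq_true', List.isEmpty_eq_false_iff, true_and,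
    Subtype.exists]
  aesop

theorem mem_sibs : ∀ (t : UTree σ) (x : List (UTree σ)),
    x ∈ sibs t ↔ x ≠ [] ∧ ∃ s ∈ subs t, x <:+ s.children
  | node a cs, x => by
    simp only [mem_sibs_node, mem_subs_node]
    have ih : ∀ c ∈ cs, x ∈ sibs c ↔ x ≠ [] ∧ ∃ s ∈ subs c, x <:+ s.children :=
      fun c _ => mem_sibs c x
    constructor
    · rintro (⟨hx, hne⟩ | ⟨c, hc, hxc⟩)
      · exact ⟨hne, _, Or.inl rfl, hx⟩
      · obtain ⟨hne, s, hs, hx⟩ := (ih c hc).mp hxc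
        exact ⟨hne, s, Or.inr ⟨c, hc, hs⟩, hx⟩
    · rintro ⟨hne, s, rfl | ⟨c, hc, hs⟩, hx⟩
      · exact Or.inl ⟨hx, hne⟩
      · exact Or.inr ⟨c, hc, (ih c hc).mpr ⟨hne, s, hs, hx⟩⟩

theorem dagEdges_eq_sum (t : UTree σ) : dagEdges t = ∑ s ∈ (subs t).toFinset, rootDeg s := by
  rw [dagEdges, ← List.sum_toFinset _ (subs t).nodup_dedup]
  congr 1
  ext
  simp

theorem hdagEdges_eq_card_add_card (t : UTree σ) :
    hdagEdges t = #{s ∈ (subs t).toFinset | rootDeg s ≠ 0} +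
      #{w ∈ (sibseqs t).toFinset | 2 ≤ w.length} := by
  simp only [hdagEdges, ← List.card_toFinset, List.toFinset_filter, decide_eq_true_eq]

def leaf : UTree ℕ := node 0 []

def tower (n : ℕ) : ℕ → UTree ℕ
  | 0 => node 1 (List.replicate n leaf)
  | k + 1 => node 1 (tower n k :: (tower n k).children)

variable {n : ℕ}

theorem tower_eq_node (n k : ℕ) : tower n k = node 1 (tower n k).children := by
  cases k <;> rfl

theorem length_children_tower (n k : ℕ) : (tower n k).children.length = k + n := by
  induction k with
  | zero => simp [tower, children]
  | succ k ih => simp only [tower, children, List.length_cons] at ih ⊢; omega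

theorem rootDeg_tower (n k : ℕ) : rootDeg (tower n k) = k + n := by
  rw [tower_eq_node, rootDeg, length_children_tower]

theorem tower_injective (n : ℕ) : Function.Injective (tower n) := fun j k h => by
  simpa [rootDeg_tower] using congrArg rootDeg h

theorem children_tower_suffix {j k : ℕ} (h : j ≤ k) :
    (tower n j).children <:+ (tower n k).children := by
  induction k, h using Nat.le_induction with
  | base => exact List.suffix_refl _
  | succ k _ ih => exact ih.trans (List.suffix_cons _ _)

theorem mem_subs_tower (hn : 1 ≤ n) (k : ℕ) (x : UTree ℕ) :
    x ∈ subs (tower n k) ↔ x = leaf ∨ ∃ j ≤ k, x = tower n j := by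
  induction k with
  | zero =>
    simp [tower, mem_subs_node, leaf, List.mem_replicate, Nat.one_le_iff_ne_zero.mp hn, or_comm]
  | succ k ih =>
    have hsubs : (∃ c ∈ tower n k :: (tower n k).children, x ∈ subs c) ↔ x ∈ subs (tower n k) := by
      refine ⟨fun ⟨c, hc, hx⟩ => ?_, fun hx => ⟨_, List.mem_cons_self, hx⟩⟩
      obtain rfl | hc := List.mem_cons.mp hc
      · exact hx
      · rw [tower_eq_node, mem_subs_node]
        exact Or.inr ⟨c, hc, hx⟩
    rw [tower, mem_subs_node, hsubs, ih]
    constructor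
    · rintro (rfl | rfl | ⟨j, hj, rfl⟩)
      exacts [Or.inr ⟨k + 1, le_rfl, rfl⟩, Or.inl rfl, Or.inr ⟨j, hj.trans k.le_succ, rfl⟩]
    · rintro (rfl | ⟨j, hj, rfl⟩)
      · exact Or.inr (Or.inl rfl)
      · obtain hj | rfl := Nat.le_succ_iff.mp hj
        exacts [Or.inr (Or.inr ⟨j, hj, rfl⟩), Or.inl rfl]

theorem mem_sibs_tower (hn : 1 ≤ n) (k : ℕ) (x : List (UTree ℕ)) :
    x ∈ sibs (tower n k) ↔ x ≠ [] ∧ x <:+ (tower n k).children := by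
  rw [mem_sibs]
  refine and_congr_right fun hne => ⟨?_, fun hx => ⟨_, ?_, hx⟩⟩
  · rintro ⟨s, hs, hx⟩
    obtain rfl | ⟨j, hj, rfl⟩ := (mem_subs_tower hn k s).mp hs
    · exact absurd (List.suffix_nil.mp hx) hne
    · exact hx.trans (children_tower_suffix hj)
  · exact (mem_subs_tower hn k _).mpr (Or.inr ⟨k, le_rfl, rfl⟩)

theorem toFinset_subs_tower (hn : 1 ≤ n) (k : ℕ) :
    (subs (tower n k)).toFinset = insert leaf ((range (k + 1)).image (tower n)) := by
  ext x
  simp [mem_subs_tower hn, eq_comm]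

theorem two_mul_dagEdges_tower (hn : 1 ≤ n) (k : ℕ) :
    2 * dagEdges (tower n k) = (k + 1) * (k + 2 * n) := by
  rw [dagEdges_eq_sum, toFinset_subs_tower hn, sum_insert_zero (by rfl : rootDeg leaf = 0),
    sum_image fun _ _ _ _ h => tower_injective n h]
  simp only [rootDeg_tower, sum_add_distrib, sum_const, card_range, smul_eq_mul]
  rw [mul_add, mul_comm 2, sum_range_id_mul_two, Nat.add_sub_cancel]
  ring

theorem hdagEdges_tower (hn : 1 ≤ n) (k : ℕ) : hdagEdges (tower n k) = 2 * k + n := by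
  have hnodes : #{s ∈ (subs (tower n k)).toFinset | rootDeg s ≠ 0} = k + 1 := by
    rw [toFinset_subs_tower hn, filter_insert, if_neg (by simp [leaf, rootDeg]),
      filter_true_of_mem (by simp [rootDeg_tower]; omega),
      card_image_of_injective _ (tower_injective n), card_range]
  have hseqs : {w ∈ (sibseqs (tower n k)).toFinset | 2 ≤ w.length} =
      {w ∈ (tower n k).children.tails.toFinset | 2 ≤ w.length} := by
    ext w
    simp only [mem_filter, List.mem_toFinset, sibseqs, List.mem_cons, mem_sibs_tower hn,
      List.mem_tails]
    refine and_congr_left fun hw => ?_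
    have hne : w ≠ [] := List.ne_nil_of_length_pos (by omega)
    have hsingleton : w ≠ [tower n k] := by rintro rfl; simp at hw
    simp [hne, hsingleton]
  rw [hdagEdges_eq_card_add_card, hnodes, hseqs, List.card_filter_length_le_tails,
    length_children_tower]
  omega

end UTree

/-- There is a family of trees `s n` (for `n ≥ 1`) with `|dag(s_n)| = 3n(n+1)/2` and
`|hdag(s_n)| = 3n`, so that `|dag(s_n)| > (1/6)|hdag(s_n)|²`. -/
theorem exists_family_dag_gt_sixth_hdag_sq :
    ∃ s : ℕ → UTree ℕ, ∀ n : ℕ, 1 ≤ n →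
      2 * UTree.dagEdges (s n) = 3 * n * (n + 1) ∧
      UTree.hdagEdges (s n) = 3 * n ∧
      UTree.hdagEdges (s n) ^ 2 < 6 * UTree.dagEdges (s n) := by
  refine ⟨fun n => UTree.tower n n, fun n hn => ?_⟩
  have hdag := UTree.two_mul_dagEdges_tower hn n
  have hhdag := UTree.hdagEdges_tower hn n
  refine ⟨by rw [hdag]; ring, by rw [hhdag]; ring, ?_⟩
  rw [hhdag]
  nlinarith
end

section
/- For p ≥ 1, the number of unlabeled unranked ordered trees with p edges and root degree d (for 1 ≤ d ≤ p) is (d/p)·C(2p−1−d, p−1). -/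
/-!
Let `N p d` count the trees with `p` edges and root degree `d`. Deleting a first child that is a
leaf, or else detaching the first grandchild as a new first child, is a bijection giving
`N (p+1) (d+1) = N p d + N (p+1) (d+2)`. The ballot numbers `(d/p)·C(2p−1−d, p−1)` satisfy the
same recurrence (Pascal's rule plus `p·C(n, p) = (n−p+1)·C(n, p−1)`) and the same boundary values
`N p p = 1`, `N (p+1) 0 = 0`.
-/

theorem Nat.ballot_induction {P : ℕ → ℕ → Prop} (zero_zero : P 0 0)
    (of_lt : ∀ p d, p < d → P p d) (succ_zero : ∀ p, P (p + 1) 0)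
    (succ_succ : ∀ p d, d ≤ p → P p d → P (p + 1) (d + 2) → P (p + 1) (d + 1)) :
    ∀ p d, P p d := by
  intro p
  induction p with
  | zero =>
    rintro (_ | d)
    · exact zero_zero
    · exact of_lt 0 (d + 1) d.succ_pos
  | succ p ih =>
    suffices ∀ j d, d + j = p + 2 → P (p + 1) d from fun d =>
      if h : d ≤ p + 2 then this (p + 2 - d) d (by omega) else of_lt _ _ (by omega)
    intro j
    induction j with
    | zero => rintro d rfl; exact of_lt _ _ (by omega)
    | succ j ihj =>
      rintro (_ | d) hd
      · exact succ_zero p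
      · exact succ_succ p d (by omega) (ih d) (ihj (d + 2) (by omega))

theorem Nat.ballot_recurrence {p d a b : ℕ} (hdp : d < p)
    (ha : p * a = d * (2 * p - 1 - d).choose (p - 1))
    (hb : (p + 1) * b = (d + 2) * (2 * (p + 1) - 1 - (d + 2)).choose (p + 1 - 1)) :
    (p + 1) * (a + b) = (d + 1) * (2 * (p + 1) - 1 - (d + 1)).choose (p + 1 - 1) := by
  obtain ⟨m, rfl⟩ : ∃ m, p = d + m + 1 := ⟨p - d - 1, by omega⟩
  rw [show 2 * (d + m + 1) - 1 - d = d + 2 * m + 1 by omega, Nat.add_sub_cancel] at ha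
  rw [show 2 * (d + m + 1 + 1) - 1 - (d + 2) = d + 2 * m + 1 by omega, Nat.add_sub_cancel] at hb
  rw [show 2 * (d + m + 1 + 1) - 1 - (d + 1) = d + 2 * m + 1 + 1 by omega, Nat.add_sub_cancel,
    Nat.choose_succ_succ]
  have hratio := Nat.choose_succ_right_eq (d + 2 * m + 1) (d + m)
  rw [show d + 2 * m + 1 - (d + m) = m + 1 by omega] at hratio
  apply Nat.eq_of_mul_eq_mul_left (show 0 < d + m + 1 by omega)
  zify at ha hb hratio ⊢
  linear_combination ((d : ℤ) + m + 2) * ha + ((d : ℤ) + m + 1) * hb + hratio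

namespace UTree

@[simp]
theorem edges_node {σ : Type} (a : σ) (cs : List (UTree σ)) :
    edges (node a cs) = cs.length + (cs.map edges).sum := by
  simp [edges]

@[simp]
theorem rootDeg_node {σ : Type} (a : σ) (cs : List (UTree σ)) : rootDeg (node a cs) = cs.length :=
  rfl

theorem rootDeg_le_edges {σ : Type} (t : UTree σ) : rootDeg t ≤ edges t := by
  cases t
  simp

abbrev EdgesRootDeg (p d : ℕ) : Type := {t : UTree Unit // edges t = p ∧ rootDeg t = d}

theorem isEmpty_edgesRootDeg_of_lt {p d : ℕ} (h : p < d) : IsEmpty (EdgesRootDeg p d) :=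
  ⟨fun ⟨t, he, hd⟩ => by have := rootDeg_le_edges t; omega⟩

instance (p : ℕ) : IsEmpty (EdgesRootDeg (p + 1) 0) :=
  ⟨fun ⟨node _ cs, he, hd⟩ => by simp_all⟩

instance : Unique (EdgesRootDeg 0 0) where
  default := ⟨node () [], by simp⟩
  uniq := fun ⟨node () cs, _, hd⟩ => by
    obtain rfl : cs = [] := List.length_eq_zero_iff.mp hd
    rfl

/-- A tree whose first child is a leaf loses that leaf; otherwise the first grandchild is
detached and becomes the new first child, raising the root degree by one. -/
def edgesRootDegSuccEquiv (p d : ℕ) :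
    EdgesRootDeg (p + 1) (d + 1) ≃ EdgesRootDeg p d ⊕ EdgesRootDeg (p + 1) (d + 2) where
  toFun
    | ⟨node _ [], h⟩ => absurd h.2 (by simp)
    | ⟨node _ (node _ [] :: cs), h⟩ => .inl ⟨node () cs, by simp_all; omega⟩
    | ⟨node _ (node _ (g :: gs) :: cs), h⟩ =>
      .inr ⟨node () (g :: node () gs :: cs), by simp_all; omega⟩
  invFun
    | .inl ⟨node _ cs, h⟩ => ⟨node () (node () [] :: cs), by simp_all; omega⟩
    | .inr ⟨node _ [], h⟩ => absurd h.2 (by simp)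
    | .inr ⟨node _ [_], h⟩ => absurd h.2 (by simp)
    | .inr ⟨node _ (g :: node _ gs :: cs), h⟩ =>
      ⟨node () (node () (g :: gs) :: cs), by simp_all; omega⟩
  left_inv
    | ⟨node () [], h⟩ => absurd h.2 (by simp)
    | ⟨node () (node () [] :: _), _⟩ => rfl
    | ⟨node () (node () (_ :: _) :: _), _⟩ => rfl
  right_inv
    | .inl ⟨node () _, _⟩ => rfl
    | .inr ⟨node () [], h⟩ => absurd h.2 (by simp)
    | .inr ⟨node () [_], h⟩ => absurd h.2 (by simp)
    | .inr ⟨node () (_ :: node () _ :: _), _⟩ => rfl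

instance finite_edgesRootDeg (p d : ℕ) : Finite (EdgesRootDeg p d) := by
  induction p, d using Nat.ballot_induction with
  | zero_zero => infer_instance
  | of_lt p d h => have := isEmpty_edgesRootDeg_of_lt h; infer_instance
  | succ_zero p => infer_instance
  | succ_succ p d _ _ _ => exact .of_equiv _ (edgesRootDegSuccEquiv p d).symm

theorem card_edgesRootDeg_succ_succ (p d : ℕ) :
    Nat.card (EdgesRootDeg (p + 1) (d + 1)) =
      Nat.card (EdgesRootDeg p d) + Nat.card (EdgesRootDeg (p + 1) (d + 2)) := by
  rw [Nat.card_congr (edgesRootDegSuccEquiv p d), Nat.card_sum]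

theorem card_edgesRootDeg_of_lt {p d : ℕ} (h : p < d) : Nat.card (EdgesRootDeg p d) = 0 :=
  have := isEmpty_edgesRootDeg_of_lt h
  Nat.card_of_isEmpty

theorem card_edgesRootDeg_self (p : ℕ) : Nat.card (EdgesRootDeg p p) = 1 := by
  induction p with
  | zero => exact Nat.card_unique
  | succ p ih =>
    rw [card_edgesRootDeg_succ_succ, ih, card_edgesRootDeg_of_lt (by omega)]

theorem mul_card_edgesRootDeg {p d : ℕ} (hdp : d ≤ p) :
    p * Nat.card (EdgesRootDeg p d) = d * (2 * p - 1 - d).choose (p - 1) := by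
  induction p, d using Nat.ballot_induction with
  | zero_zero => simp
  | of_lt p d h => omega
  | succ_zero p => simp
  | succ_succ p d hd ih ih₂ =>
    rw [card_edgesRootDeg_succ_succ]
    rcases hd.lt_or_eq with hd | rfl
    · exact Nat.ballot_recurrence hd (ih hd.le) (ih₂ (by omega))
    · rw [card_edgesRootDeg_self, card_edgesRootDeg_of_lt (by omega),
        show 2 * (d + 1) - 1 - (d + 1) = d by omega, Nat.add_sub_cancel, Nat.choose_self]

end UTree

theorem card_unranked_root_degree_general (p d : ℕ) (hdp : d ≤ p) :
    p * Nat.card {t : UTree Unit // UTree.edges t = p ∧ UTree.rootDeg t = d} =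
      d * Nat.choose (2 * p - 1 - d) (p - 1) :=
  UTree.mul_card_edgesRootDeg hdp

/-- For `p ≥ 1` and `1 ≤ d ≤ p`, the number of unlabeled unranked ordered trees with `p`
edges and root degree `d` is `(d/p)·C(2p−1−d, p−1)`. -/
theorem card_unranked_root_degree (p d : ℕ) (hp : 1 ≤ p) (hd1 : 1 ≤ d) (hdp : d ≤ p) :
    p * Nat.card {t : UTree Unit // UTree.edges t = p ∧ UTree.rootDeg t = d} =
      d * Nat.choose (2 * p - 1 - d) (p - 1) :=
  card_unranked_root_degree_general p d hdp
end
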